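/- (Soundness of the BCPRefine rule) Let u be a non-root query vertex and s ∈ C(u) a candidate such that for some backward neighbor u.b ∈ N_-^o(u), s has no data-graph neighbor in C(u.b), i.e., N(s) ∩ C(u.b) = ∅. If the candidate sets are complete (every subgraph isomorphism f maps each query vertex v into C(v)), then no subgraph isomorphism f from Q to D satisfies f(u) = s; hence s can be safely pruned from C(u). -/

import Mathlib

def IsSubgraphIso {VQ VD Λ : Type*} (Q : SimpleGraph VQ) (D : SimpleGraph VD)
    (LQ : VQ → Λ) (LD : VD → Λ) (f : VQ → VD) : Prop :=
  Function.Injective f ∧ (∀ v, LD (f v) = LQ v) ∧ ∀ u v, Q.Adj u v → D.Adj (f u) (f v)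

theorem bcprefine_sound_general {VQ VD Λ : Type*}
    (Q : SimpleGraph VQ) (D : SimpleGraph VD) (LQ : VQ → Λ) (LD : VD → Λ)
    (C : VQ → Set VD)
    (hcomplete : ∀ f : VQ → VD, IsSubgraphIso Q D LQ LD f → ∀ v, f v ∈ C v)
    (u ub : VQ) (s : VD)
    (hadj : Q.Adj u ub)
    (hempty : D.neighborSet s ∩ C ub = ∅) :
    ∀ f : VQ → VD, IsSubgraphIso Q D LQ LD f → f u ≠ s := by
  rintro f hf rfl
  have hmem : f ub ∈ D.neighborSet (f u) ∩ C ub := ⟨hf.2.2 u ub hadj, hcomplete f hf ub⟩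
  exact Set.eq_empty_iff_forall_notMem.mp hempty _ hmem

/-- Soundness of the BCPRefine rule: if `s ∈ C u` has no data-graph
neighbor in `C ub` for some backward neighbor `ub` of `u` (a neighbor of `u` in `Q`),
and the candidate sets are complete, then no subgraph isomorphism maps `u` to `s`. -/
theorem bcprefine_sound {VQ VD Λ : Type*}
    (Q : SimpleGraph VQ) (D : SimpleGraph VD) (LQ : VQ → Λ) (LD : VD → Λ)
    (C : VQ → Set VD)
    (hcomplete : ∀ f : VQ → VD, IsSubgraphIso Q D LQ LD f → ∀ v, f v ∈ C v)
    (u ub : VQ) (s : VD)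
    (hs : s ∈ C u)
    (hadj : Q.Adj u ub)
    (hempty : D.neighborSet s ∩ C ub = ∅) :
    ∀ f : VQ → VD, IsSubgraphIso Q D LQ LD f → f u ≠ s :=
  bcprefine_sound_general Q D LQ LD C hcomplete u ub s hadj hempty
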